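/- arXiv:2408.08192 — 3 statements merged into one kernel-verified Lean document; each statement's English description precedes it below -/
import Mathlib

section
/- Let (S, ν) be a measure space, d₂ ∈ ℕ, F ≥ 0, and ψ : S → ℝ^{d₂} measurable with: ψᵢ(s) ≥ 0 for all i and s, ∫ ψᵢ(s) dν(s) = 1 for every coordinate i, and Σᵢ ψᵢ(s) ≤ F for every s. Let η ∈ ℝ^{d₂} lie in the standard simplex (ηᵢ ≥ 0 for all i and Σᵢ ηᵢ = 1), and let G_ψ be the d₂ × d₂ Gram matrix with entries (G_ψ)ᵢⱼ = ∫ ψᵢ(s) ψⱼ(s) dν(s) (these integrals are finite since ψᵢ ≤ F pointwise and ψⱼ is integrable). Then Σᵢ |(G_ψ η)ᵢ| ≤ F, and consequently for every s' ∈ S the population semi-gradient satisfies Σᵢ |(G_ψ η − ψ(s'))ᵢ| ≤ 2F; in particular its Euclidean norm satisfies ‖G_ψ η − ψ(s')‖ ≤ 2F. -/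
open MeasureTheory

theorem l2_le_l1 {n : ℕ} (x : Fin n → ℝ) :
    ‖(WithLp.equiv 2 (Fin n → ℝ)).symm x‖ ≤ ∑ i, |x i| := by
  rw [EuclideanSpace.norm_eq]
  have h : ∑ i, ‖((WithLp.equiv 2 (Fin n → ℝ)).symm x) i‖ ^ 2 ≤ (∑ i, |x i|) ^ 2 := by
    calc ∑ i, ‖((WithLp.equiv 2 (Fin n → ℝ)).symm x) i‖ ^ 2
        = ∑ i, |x i| ^ 2 := by simp [Real.norm_eq_abs]
      _ ≤ (∑ i, |x i|) ^ 2 := Finset.sum_sq_le_sq_sum_of_nonneg (fun i _ => abs_nonneg _)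
  calc Real.sqrt (∑ i, ‖((WithLp.equiv 2 (Fin n → ℝ)).symm x) i‖ ^ 2)
      ≤ Real.sqrt ((∑ i, |x i|) ^ 2) := Real.sqrt_le_sqrt h
    _ = ∑ i, |x i| := Real.sqrt_sq (Finset.sum_nonneg fun i _ => abs_nonneg _)

/-- Population-measure part of the gradient-bounds lemma: for a measure basis `ψ`
whose components are probability densities with `Σᵢ ψᵢ(s) ≤ F`, a simplex
parameter `η`, and the Gram matrix `G`, the population semi-gradient
`G η − ψ(s')` has ℓ¹-norm at most `2F`, hence Euclidean norm at most `2F`. -/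
theorem stmt_3 {S : Type*} [MeasurableSpace S] (ν : Measure S) (d₂ : ℕ)
    (F : ℝ) (hF : 0 ≤ F)
    (ψ : S → Fin d₂ → ℝ) (hψmeas : Measurable ψ)
    (hψpos : ∀ i s, 0 ≤ ψ s i)
    (hψprob : ∀ i, ∫ s, ψ s i ∂ν = 1)
    (hψbound : ∀ s, ∑ i, ψ s i ≤ F)
    (η : Fin d₂ → ℝ) (hη0 : ∀ i, 0 ≤ η i) (hη1 : ∑ i, η i = 1)
    (G : Matrix (Fin d₂) (Fin d₂) ℝ)
    (hG : ∀ i j, G i j = ∫ s, ψ s i * ψ s j ∂ν) :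
    (∑ i, |G.mulVec η i| ≤ F) ∧
    ∀ s' : S, (∑ i, |(G.mulVec η - ψ s') i| ≤ 2 * F) ∧
      ‖(WithLp.equiv 2 (Fin d₂ → ℝ)).symm (G.mulVec η - ψ s')‖ ≤ 2 * F := by
  have hmeas : ∀ i : Fin d₂, Measurable (fun s => ψ s i) := fun i =>
    (measurable_pi_apply i).comp hψmeas
  have hint : ∀ j : Fin d₂, Integrable (fun s => ψ s j) ν := by
    intro j
    by_contra h
    have := hψprob j
    rw [integral_undef h] at this
    exact one_ne_zero this.symm
  have hψleF : ∀ s i, ψ s i ≤ F := fun s i =>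
    (Finset.single_le_sum (fun k _ => hψpos k s) (Finset.mem_univ i)).trans (hψbound s)
  have hintmul : ∀ i j : Fin d₂, Integrable (fun s => ψ s i * ψ s j) ν := by
    intro i j
    refine ((hint j).const_mul F).mono' (((hmeas i).mul (hmeas j)).aestronglyMeasurable) ?_
    filter_upwards with s
    rw [Real.norm_eq_abs, abs_of_nonneg (mul_nonneg (hψpos i s) (hψpos j s))]
    exact mul_le_mul_of_nonneg_right (hψleF s i) (hψpos j s)
  have hGpos : ∀ i j, 0 ≤ G i j := fun i j => by
    rw [hG i j]
    exact integral_nonneg fun s => mul_nonneg (hψpos i s) (hψpos j s)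
  have hcol : ∀ j, ∑ i, G i j ≤ F := by
    intro j
    have h1 : ∑ i, G i j = ∫ s, (∑ i, ψ s i) * ψ s j ∂ν := by
      simp only [hG]
      rw [← integral_finset_sum _ (fun i _ => hintmul i j)]
      congr 1; ext s; rw [Finset.sum_mul]
    have hintsum : Integrable (fun s => (∑ i, ψ s i) * ψ s j) ν := by
      have := integrable_finset_sum (μ := ν) Finset.univ (fun i _ => hintmul i j)
      refine this.congr ?_
      filter_upwards with s
      rw [Finset.sum_mul]
    rw [h1]
    calc ∫ s, (∑ i, ψ s i) * ψ s j ∂ν ≤ ∫ s, F * ψ s j ∂ν :=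
          integral_mono hintsum ((hint j).const_mul F)
            (fun s => mul_le_mul_of_nonneg_right (hψbound s) (hψpos j s))
      _ = F := by rw [integral_const_mul, hψprob j, mul_one]
  -- main l1 bound on G η
  have hmain : ∑ i, |G.mulVec η i| ≤ F := by
    have habs : ∀ i : Fin d₂, |∑ j, G i j * η j| = ∑ j, G i j * η j := fun i =>
      abs_of_nonneg (Finset.sum_nonneg fun j _ => mul_nonneg (hGpos i j) (hη0 j))
    simp only [Matrix.mulVec, dotProduct, habs]
    rw [Finset.sum_comm]
    calc ∑ j, ∑ i, G i j * η j = ∑ j, (∑ i, G i j) * η j := by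
          simp [Finset.sum_mul]
      _ ≤ ∑ j, F * η j := Finset.sum_le_sum fun j _ =>
          mul_le_mul_of_nonneg_right (hcol j) (hη0 j)
      _ = F := by rw [← Finset.mul_sum, hη1, mul_one]
  refine ⟨hmain, fun s' => ?_⟩
  have hl1 : ∑ i, |(G.mulVec η - ψ s') i| ≤ 2 * F := by
    calc ∑ i, |(G.mulVec η - ψ s') i| ≤ ∑ i, (|G.mulVec η i| + |ψ s' i|) :=
          Finset.sum_le_sum fun i _ => abs_sub (G.mulVec η i) (ψ s' i)
      _ = (∑ i, |G.mulVec η i|) + ∑ i, |ψ s' i| := Finset.sum_add_distrib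
      _ ≤ F + F := by
          refine add_le_add hmain ?_
          calc ∑ i, |ψ s' i| = ∑ i, ψ s' i := by
                exact Finset.sum_congr rfl fun i _ => abs_of_nonneg (hψpos i s')
            _ ≤ F := hψbound s'
      _ = 2 * F := by ring
  refine ⟨hl1, le_trans (l2_le_l1 _) hl1⟩
end

section
/- Let w > 0 and C₂, C₃ ≥ 0. Define step sizes α_t = 4/(w·(t+1)) for t ∈ ℕ. Let e : ℕ → ℝ be a sequence with e_t ≥ 0 for all t, satisfying e_{t+1} ≤ (1 − α_t·w)·e_t + α_t²·C₂ + α_t³·C₃ for all t. Then for every T ∈ ℕ, Σ_{t=0}^{T} t·e_t ≤ (8·C₂/w²)·Σ_{t=0}^{T} t/(t+1) + (32·C₃/w³)·Σ_{t=0}^{T} t/(t+1)². -/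
/-!
Multiplying the recursion by `t (t + 1)` makes it telescope, because
`t (t + 1) (1 - 4/(t+1)) = (t - 1) t - 2 t`: with `u t = (t - 1) t e t` one gets
`u (t + 1) + 2 t e t ≤ u t + (bias terms)`, and summing uses `u 0 = 0` and `u (T + 1) ≥ 0`.
-/

open Finset

theorem add_sum_range_le_of_succ_add_le {α : Type*} [AddCommMonoid α] [PartialOrder α]
    [IsOrderedCancelAddMonoid α] {u d g : ℕ → α} (h : ∀ t, u (t + 1) + d t ≤ u t + g t)
    (n : ℕ) : u n + ∑ t ∈ range n, d t ≤ u 0 + ∑ t ∈ range n, g t := by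
  induction n with
  | zero => simp
  | succ n ih =>
    rw [sum_range_succ, sum_range_succ]
    refine le_of_add_le_add_left (a := u n) ?_
    calc u n + (u (n + 1) + (∑ t ∈ range n, d t + d n))
        = (u (n + 1) + d n) + (u n + ∑ t ∈ range n, d t) := by abel
      _ ≤ (u n + g n) + (u 0 + ∑ t ∈ range n, g t) := add_le_add (h n) ih
      _ = u n + (u 0 + (∑ t ∈ range n, g t + g n)) := by abel

theorem weighted_step_of_stepSize {w C₂ C₃ x y : ℝ} (hw : w ≠ 0) (t : ℕ)
    (h : y ≤ (1 - 4 / (w * (t + 1)) * w) * x + (4 / (w * (t + 1))) ^ 2 * C₂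
      + (4 / (w * (t + 1))) ^ 3 * C₃) :
    t * (t + 1) * y + 2 * t * x
      ≤ (t - 1) * t * x
        + 2 * (8 * C₂ / w ^ 2 * (t / (t + 1)) + 32 * C₃ / w ^ 3 * (t / (t + 1) ^ 2)) :=
  calc (t : ℝ) * (t + 1) * y + 2 * t * x
      ≤ t * (t + 1) * ((1 - 4 / (w * (t + 1)) * w) * x + (4 / (w * (t + 1))) ^ 2 * C₂
          + (4 / (w * (t + 1))) ^ 3 * C₃) + 2 * t * x := by gcongr
    _ = (t - 1) * t * x
          + 2 * (8 * C₂ / w ^ 2 * (t / (t + 1)) + 32 * C₃ / w ^ 3 * (t / (t + 1) ^ 2)) := by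
      field_simp
      ring

theorem stmt_7_general (w C₂ C₃ : ℝ) (hw : 0 < w)
    (α : ℕ → ℝ) (hα : ∀ t : ℕ, α t = 4 / (w * (t + 1)))
    (e : ℕ → ℝ) (he : ∀ t, 0 ≤ e t)
    (hrec : ∀ t, e (t + 1) ≤ (1 - α t * w) * e t + (α t) ^ 2 * C₂ + (α t) ^ 3 * C₃) :
    ∀ T : ℕ, ∑ t ∈ Finset.range (T + 1), (t : ℝ) * e t
      ≤ (8 * C₂ / w ^ 2) * ∑ t ∈ Finset.range (T + 1), (t : ℝ) / (t + 1)
        + (32 * C₃ / w ^ 3) * ∑ t ∈ Finset.range (T + 1), (t : ℝ) / (t + 1) ^ 2 := by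
  intro T
  have telescoped := add_sum_range_le_of_succ_add_le
    (u := fun t : ℕ => ((t : ℝ) - 1) * t * e t) (d := fun t : ℕ => 2 * (t * e t))
    (g := fun t : ℕ => 2 * (8 * C₂ / w ^ 2 * (t / (t + 1)) + 32 * C₃ / w ^ 3 * (t / (t + 1) ^ 2)))
    (fun t => by
      have := weighted_step_of_stepSize hw.ne' t (hα t ▸ hrec t)
      push_cast
      linarith)
    (T + 1)
  have last_nonneg : 0 ≤ (T : ℝ) * (T + 1) * e (T + 1) := by
    have := he (T + 1)
    positivity
  simp only [← mul_sum, sum_add_distrib, Nat.cast_add, Nat.cast_one, Nat.cast_zero,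
    add_sub_cancel_right, zero_sub, mul_zero, zero_mul, zero_add] at telescoped
  linarith

/-- Telescoping estimate proving Corollary 2 (linearly decaying step-size):
with `α_t = 4/(w(t+1))` and the one-step progress recursion, the weighted sums
of the errors are bounded as stated. -/
theorem stmt_7 (w C₂ C₃ : ℝ) (hw : 0 < w) (hC₂ : 0 ≤ C₂) (hC₃ : 0 ≤ C₃)
    (α : ℕ → ℝ) (hα : ∀ t : ℕ, α t = 4 / (w * (t + 1)))
    (e : ℕ → ℝ) (he : ∀ t, 0 ≤ e t)
    (hrec : ∀ t, e (t + 1) ≤ (1 - α t * w) * e t + (α t) ^ 2 * C₂ + (α t) ^ 3 * C₃) :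
    ∀ T : ℕ, ∑ t ∈ Finset.range (T + 1), (t : ℝ) * e t
      ≤ (8 * C₂ / w ^ 2) * ∑ t ∈ Finset.range (T + 1), (t : ℝ) / (t + 1)
        + (32 * C₃ / w ^ 3) * ∑ t ∈ Finset.range (T + 1), (t : ℝ) / (t + 1) ^ 2 :=
  stmt_7_general w C₂ C₃ hw α hα e he hrec
end

section
/- Let γ, ρ ∈ [0, 1), σ, R, L_P, L_π, L_r ≥ 0, let d₂ ∈ ℕ with d₂ ≥ 1, and let k ∈ ℕ with k ≥ 1. Let ε_q, ε_μ, ε_φ, ε_ψ ≥ 0 be real numbers satisfying ε_q ≤ (γ + γσR·L_π/(1−γ))·ε_q + (L_r + γσR·L_P/((1−γ)·√d₂))·ε_μ + ε_φ and ε_μ ≤ (ρ^k + k·L_P/√d₂)·ε_μ + k·L_π·ε_q + k·ε_ψ. If moreover 2·L_π·(γσR + (1−γ)·k) ≤ (1−γ)² and 2·(L_P·(γσR + (1−γ)·k) + L_r·(1−γ)·√d₂) ≤ (1 + ρ − 2ρ^k)·(1−γ)·√d₂, then ε_q + ε_μ ≤ (2/(1 − max(γ, ρ)))·(ε_φ +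 k·ε_ψ). -/
set_option maxHeartbeats 1000000


/-- Concluding derivation of Theorem 2 (approximation error of PA-LFA for
non-linear MFGs): combining the two coupled linear inequalities on the value
error `εq` and population error `εμ` under the smallness conditions bounds the
total error by the inherent basis errors `εφ` and `εψ`. -/
theorem stmt_12 (γ ρ σ R L_P L_pi L_r : ℝ) (d₂ k : ℕ)
    (hγ0 : 0 ≤ γ) (hγ1 : γ < 1) (hρ0 : 0 ≤ ρ) (hρ1 : ρ < 1)
    (hσ : 0 ≤ σ) (hR : 0 ≤ R) (hLP : 0 ≤ L_P) (hLpi : 0 ≤ L_pi) (hLr : 0 ≤ L_r)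
    (hd₂ : 1 ≤ d₂) (hk : 1 ≤ k)
    (εq εμ εφ εψ : ℝ) (hεq : 0 ≤ εq) (hεμ : 0 ≤ εμ) (hεφ : 0 ≤ εφ) (hεψ : 0 ≤ εψ)
    (h1 : εq ≤ (γ + γ * σ * R * L_pi / (1 - γ)) * εq
          + (L_r + γ * σ * R * L_P / ((1 - γ) * Real.sqrt d₂)) * εμ + εφ)
    (h2 : εμ ≤ (ρ ^ k + (k : ℝ) * L_P / Real.sqrt d₂) * εμ
          + (k : ℝ) * L_pi * εq + (k : ℝ) * εψ)
    (hc1 : 2 * L_pi * (γ * σ * R + (1 - γ) * (k : ℝ)) ≤ (1 - γ) ^ 2)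
    (hc2 : 2 * (L_P * (γ * σ * R + (1 - γ) * (k : ℝ)) + L_r * (1 - γ) * Real.sqrt d₂)
          ≤ (1 + ρ - 2 * ρ ^ k) * (1 - γ) * Real.sqrt d₂) :
    εq + εμ ≤ (2 / (1 - max γ ρ)) * (εφ + (k : ℝ) * εψ) := by
  set s := Real.sqrt d₂ with hs_def
  have hg : (0:ℝ) < 1 - γ := by linarith
  have hs : (0:ℝ) < s := Real.sqrt_pos.mpr (by exact_mod_cast Nat.lt_of_lt_of_le Nat.zero_lt_one hd₂)
  set m := max γ ρ with hm_def
  have hγm : γ ≤ m := le_max_left _ _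
  have hρm : ρ ≤ m := le_max_right _ _
  have hm1 : m < 1 := max_lt hγ1 hρ1
  -- Bound on the coefficient of εq
  have hAD : γ + γ * σ * R * L_pi / (1 - γ) + (k : ℝ) * L_pi ≤ (1 + m) / 2 := by
    have h : γ * σ * R * L_pi / (1 - γ) ≤ (1 - γ) / 2 - (k : ℝ) * L_pi := by
      rw [div_le_iff₀ hg]
      nlinarith
    linarith
  -- Bound on the coefficient of εμ
  have hBC : L_r + γ * σ * R * L_P / ((1 - γ) * s) + (ρ ^ k + (k : ℝ) * L_P / s)
      ≤ (1 + m) / 2 := by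
    have e : γ * σ * R * L_P / ((1 - γ) * s) + (k : ℝ) * L_P / s
        = (γ * σ * R * L_P + (k : ℝ) * L_P * (1 - γ)) / ((1 - γ) * s) := by
      field_simp
    have h : γ * σ * R * L_P / ((1 - γ) * s) + (k : ℝ) * L_P / s
        ≤ (1 + ρ) / 2 - ρ ^ k - L_r := by
      rw [e, div_le_iff₀ (by positivity)]
      nlinarith
    linarith
  have hq : (γ + γ * σ * R * L_pi / (1 - γ)) * εq + (k : ℝ) * L_pi * εq
      ≤ (1 + m) / 2 * εq := by
    have := mul_le_mul_of_nonneg_right hAD hεq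
    nlinarith
  have hμ : (L_r + γ * σ * R * L_P / ((1 - γ) * s)) * εμ
      + (ρ ^ k + (k : ℝ) * L_P / s) * εμ ≤ (1 + m) / 2 * εμ := by
    have := mul_le_mul_of_nonneg_right hBC hεμ
    nlinarith
  have hsum : εq + εμ ≤ (1 + m) / 2 * εq + (1 + m) / 2 * εμ + (εφ + (k : ℝ) * εψ) := by
    linarith
  have hgoal : (1 - m) * (εq + εμ) ≤ 2 * (εφ + (k : ℝ) * εψ) := by nlinarith
  rw [div_mul_eq_mul_div, le_div_iff₀ (by linarith : (0:ℝ) < 1 - m)]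
  nlinarith
end
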